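/- arXiv:1401.3638 — 4 statements merged into one kernel-verified Lean document; each statement's English description precedes it below -/
import Mathlib

section
/- Let Γ ≤ S_n be a permutation group and z ∈ Z^n a core point for Γ with z not in the fixed space fix(Γ). Then gcd(z_1, ..., z_n) = 1. -/
/-!
If `d = gcd(z) ≥ 2` and `γz ≠ z`, the point `((d - 1) • z + γz) / d = z - z/d + γ(z/d)` is integral
and lies in the open segment between the orbit points `z` and `γz`. All orbit points have the same
Euclidean norm, so by strict convexity this point is strictly shorter than `z`, hence not in the orbit,
contradicting that `z` is a core point.
-/

noncomputable section

open scoped RealInnerProductSpace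

def permAct {n : ℕ} (γ : Equiv.Perm (Fin n)) (x : EuclideanSpace ℝ (Fin n)) :
    EuclideanSpace ℝ (Fin n) := WithLp.toLp 2 (fun i => x (γ⁻¹ i))

def allOnes (n : ℕ) : EuclideanSpace ℝ (Fin n) := WithLp.toLp 2 (fun _ => 1)

def intVec {n : ℕ} (z : Fin n → ℤ) : EuclideanSpace ℝ (Fin n) := WithLp.toLp 2 (fun i => (z i : ℝ))

def orbitSet {n : ℕ} (Γ : Subgroup (Equiv.Perm (Fin n))) (x : EuclideanSpace ℝ (Fin n)) :
    Set (EuclideanSpace ℝ (Fin n)) := {y | ∃ γ ∈ Γ, y = permAct γ x}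

def IsCorePoint {n : ℕ} (Γ : Subgroup (Equiv.Perm (Fin n))) (z : Fin n → ℤ) : Prop :=
  ∀ y : Fin n → ℤ, intVec y ∈ convexHull ℝ (orbitSet Γ (intVec z)) →
    intVec y ∈ orbitSet Γ (intVec z)

def stabSub {n : ℕ} (Γ : Subgroup (Equiv.Perm (Fin n))) (v : EuclideanSpace ℝ (Fin n)) :
    Subgroup (Equiv.Perm (Fin n)) where
  carrier := {γ | γ ∈ Γ ∧ permAct γ v = v}
  one_mem' := ⟨Γ.one_mem, rfl⟩
  mul_mem' := fun {a b} ha hb => ⟨Γ.mul_mem ha.1 hb.1, by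
    have h : permAct (a * b) v = permAct a (permAct b v) := rfl
    rw [h, hb.2, ha.2]⟩
  inv_mem' := fun {a} ha => ⟨Γ.inv_mem ha.1, by
    conv_lhs => rw [← ha.2]
    have h : permAct a⁻¹ (permAct a v) = permAct (a⁻¹ * a) v := rfl
    rw [h, inv_mul_cancel]; rfl⟩

section Orbit

variable {n : ℕ} {Γ : Subgroup (Equiv.Perm (Fin n))} {x : EuclideanSpace ℝ (Fin n)}

lemma norm_permAct (γ : Equiv.Perm (Fin n)) (x : EuclideanSpace ℝ (Fin n)) :
    ‖permAct γ x‖ = ‖x‖ := by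
  rw [EuclideanSpace.norm_eq, EuclideanSpace.norm_eq]
  congr 1
  exact Equiv.sum_comp γ⁻¹ (fun i => ‖x i‖ ^ 2)

lemma permAct_mem_orbitSet {γ : Equiv.Perm (Fin n)} (hγ : γ ∈ Γ) : permAct γ x ∈ orbitSet Γ x :=
  ⟨γ, hγ, rfl⟩

lemma self_mem_orbitSet : x ∈ orbitSet Γ x :=
  ⟨1, Γ.one_mem, rfl⟩

lemma norm_eq_of_mem_orbitSet {y : EuclideanSpace ℝ (Fin n)} (hy : y ∈ orbitSet Γ x) :
    ‖y‖ = ‖x‖ := by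
  obtain ⟨γ, -, rfl⟩ := hy
  exact norm_permAct γ x

end Orbit

lemma IsCorePoint.intVec_notMem_openSegment {n : ℕ} {Γ : Subgroup (Equiv.Perm (Fin n))}
    {z : Fin n → ℤ} (hcore : IsCorePoint Γ z) {a b : EuclideanSpace ℝ (Fin n)}
    (ha : a ∈ orbitSet Γ (intVec z)) (hb : b ∈ orbitSet Γ (intVec z)) (hab : a ≠ b)
    (y : Fin n → ℤ) : intVec y ∉ openSegment ℝ a b := by
  intro hy
  have hshort : ‖intVec y‖ < ‖intVec z‖ := by
    obtain ⟨s, t, hs, ht, hst, hy⟩ := hy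
    rw [← hy]
    exact norm_combo_lt_of_ne (norm_eq_of_mem_orbitSet ha).le (norm_eq_of_mem_orbitSet hb).le
      hab hs ht hst
  have hhull : intVec y ∈ convexHull ℝ (orbitSet Γ (intVec z)) :=
    segment_subset_convexHull ha hb (openSegment_subset_segment ℝ a b hy)
  exact hshort.ne (norm_eq_of_mem_orbitSet (hcore y hhull))

lemma intVec_mem_openSegment_permAct {n : ℕ} (z : Fin n → ℤ) {k : ℤ} (hk : 1 < k)
    (hdvd : ∀ i, k ∣ z i) (γ : Equiv.Perm (Fin n)) :
    intVec (fun i => z i - z i / k + z (γ⁻¹ i) / k) ∈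
      openSegment ℝ (intVec z) (permAct γ (intVec z)) := by
  have hkR : (1 : ℝ) < k := by exact_mod_cast hk
  refine ⟨1 - 1 / k, 1 / k, by rw [sub_pos, div_lt_one] <;> linarith, by positivity,
    by ring, ?_⟩
  ext i
  obtain ⟨a, ha⟩ := hdvd i
  obtain ⟨b, hb⟩ := hdvd (γ⁻¹ i)
  have hk0 : k ≠ 0 := by omega
  simp only [intVec, permAct, PiLp.add_apply, PiLp.smul_apply, smul_eq_mul, PiLp.toLp_apply,
    ha, hb, Int.mul_ediv_cancel_left _ hk0]
  push_cast
  field_simp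

end

theorem stmt3 {n : ℕ} (Γ : Subgroup (Equiv.Perm (Fin n))) (z : Fin n → ℤ)
    (hcore : IsCorePoint Γ z)
    (hfix : ¬ ∀ γ ∈ Γ, permAct γ (intVec z) = intVec z) :
    Finset.univ.gcd z = 1 := by
  push Not at hfix
  obtain ⟨γ, hγ, hmoved⟩ := hfix
  have hd_nonneg : 0 ≤ Finset.univ.gcd z := by
    rw [← Finset.normalize_gcd, ← Int.abs_eq_normalize]
    exact abs_nonneg _
  set d := Finset.univ.gcd z
  have hdvd : ∀ i, d ∣ z i := fun i => Finset.gcd_dvd (Finset.mem_univ i)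
  have hd0 : d ≠ 0 := by
    intro h0
    have hz : ∀ i, z i = 0 := fun i => Finset.gcd_eq_zero_iff.mp h0 i (Finset.mem_univ i)
    exact hmoved (by ext i; simp [permAct, intVec, hz])
  by_contra hd1
  exact hcore.intVec_notMem_openSegment self_mem_orbitSet (permAct_mem_orbitSet hγ)
    hmoved.symm _ (intVec_mem_openSegment_permAct z (by omega) hdvd γ)
end

section
/- Let Γ ≤ S_n be a 2-transitive permutation group with n ≥ 4. Then every core point z with respect to Γ satisfies bw(z) := max_i z_i − min_i z_i ≤ n − 3. -/
noncomputable section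

open scoped RealInnerProductSpace

/-! If `z` had box width at least `n - 2`, let `u` be the integer vector with the same coordinate
sum `S` whose entries are `⌊S/n⌋` or `⌊S/n⌋ + 1`. Averaging `γ • z` over the `γ ∈ Γ` with `γ p = a`
gives a point of `conv(Γz)` that is invariant under the stabiliser of `a`; since `Γ` is
2-transitive, this stabiliser is transitive on the remaining coordinates, so the point is the
"spike" with `z_p` in coordinate `a` and `(S - z_p)/(n - 1)` elsewhere. The spikes for fixed `p`
span all vectors of sum `S` with entries between `(S - z_p)/(n - 1)` and `z_p`. For `p` a maximal or
a minimal coordinate of `z`, the width assumption puts `u` in this set for one of the two choices,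
so `u ∈ conv(Γz)`; but `u` has width at most `1`, so it is not a permutation of `z`. -/

namespace CorePoint

variable {n : ℕ}

@[simp]
lemma permAct_apply (γ : Equiv.Perm (Fin n)) (x : EuclideanSpace ℝ (Fin n)) (c : Fin n) :
    permAct γ x c = x (γ⁻¹ c) := rfl

lemma permAct_mul (γ δ : Equiv.Perm (Fin n)) (x : EuclideanSpace ℝ (Fin n)) :
    permAct (γ * δ) x = permAct γ (permAct δ x) := rfl

lemma permAct_sum {ι : Type*} (γ : Equiv.Perm (Fin n)) (s : Finset ι)
    (f : ι → EuclideanSpace ℝ (Fin n)) : permAct γ (∑ i ∈ s, f i) = ∑ i ∈ s, permAct γ (f i) :=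
  map_sum (LinearIsometryEquiv.piLpCongrLeft 2 ℝ ℝ γ) f s

lemma permAct_smul (γ : Equiv.Perm (Fin n)) (r : ℝ) (x : EuclideanSpace ℝ (Fin n)) :
    permAct γ (r • x) = r • permAct γ x :=
  map_smul (LinearIsometryEquiv.piLpCongrLeft 2 ℝ ℝ γ) r x

lemma sum_permAct (γ : Equiv.Perm (Fin n)) (x : EuclideanSpace ℝ (Fin n)) :
    ∑ c, permAct γ x c = ∑ c, x c :=
  Equiv.sum_comp γ⁻¹ x

lemma isLinearMap_coord (c : Fin n) : IsLinearMap ℝ (fun y : EuclideanSpace ℝ (Fin n) => y c) :=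
  ⟨fun _ _ => rfl, fun _ _ => rfl⟩

lemma isLinearMap_sum_coord : IsLinearMap ℝ (fun y : EuclideanSpace ℝ (Fin n) => ∑ c, y c) :=
  ⟨fun _ _ => by simp [Finset.sum_add_distrib], fun _ _ => by simp [Finset.mul_sum]⟩

lemma sum_eq_of_mem_convexHull_orbitSet {Γ : Subgroup (Equiv.Perm (Fin n))}
    {x y : EuclideanSpace ℝ (Fin n)} (hy : y ∈ convexHull ℝ (orbitSet Γ x)) :
    ∑ c, y c = ∑ c, x c := by
  refine convexHull_min ?_ (convex_hyperplane isLinearMap_sum_coord _) hy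
  rintro _ ⟨γ, -, rfl⟩
  exact sum_permAct γ x

lemma exists_mem_convexHull_permAct_eq {H : Subgroup (Equiv.Perm (Fin n))}
    {s : Set (EuclideanSpace ℝ (Fin n))} (hs : s.Nonempty)
    (hHs : ∀ h ∈ H, ∀ y ∈ s, permAct h y ∈ s) :
    ∃ v ∈ convexHull ℝ s, ∀ h ∈ H, permAct h v = v := by
  classical
  obtain ⟨y, hy⟩ := hs
  refine ⟨∑ h : H, (Fintype.card H : ℝ)⁻¹ • permAct h y, ?_, fun h hh => ?_⟩
  · refine (convex_convexHull ℝ s).sum_mem (fun _ _ => by positivity) (by simp) fun h _ => ?_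
    exact subset_convexHull ℝ s (hHs h h.2 y hy)
  · simp only [permAct_sum, permAct_smul, ← permAct_mul]
    exact Fintype.sum_equiv (Equiv.mulLeft (⟨h, hh⟩ : H)) _ _ fun _ => rfl

@[simp]
lemma intVec_apply (z : Fin n → ℤ) (c : Fin n) : intVec z c = z c := rfl

lemma apply_eq_of_intVec_eq_permAct {y z : Fin n → ℤ} {γ : Equiv.Perm (Fin n)}
    (h : intVec y = permAct γ (intVec z)) (c : Fin n) : y (γ c) = z c := by
  simpa using congrArg (· (γ c)) h

def balancedVec (n : ℕ) (S : ℤ) (a : Fin n) : ℤ :=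
  S / n + if (a : ℕ) < (S % n).toNat then 1 else 0

section balancedVec

variable {S : ℤ}

lemma sum_balancedVec (hn : n ≠ 0) : ∑ a, balancedVec n S a = S := by
  have hr : (S % n).toNat < n := by
    have := Int.emod_lt_of_pos S (by omega : (0 : ℤ) < n)
    omega
  simp only [balancedVec, Finset.sum_add_distrib, Finset.sum_const, Finset.card_univ,
    Fintype.card_fin, nsmul_eq_mul, Finset.sum_boole, Fin.card_filter_val_lt, min_eq_right hr.le]
  rw [Int.toNat_of_nonneg (Int.emod_nonneg S (by omega))]
  exact Int.mul_ediv_add_emod S n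

lemma div_le_balancedVec (a : Fin n) : S / n ≤ balancedVec n S a := by
  unfold balancedVec; split_ifs <;> omega

lemma balancedVec_le_div_add_one (a : Fin n) : balancedVec n S a ≤ S / n + 1 := by
  unfold balancedVec; split_ifs <;> omega

lemma balancedVec_le_div_add_emod (a : Fin n) : balancedVec n S a ≤ S / n + S % n := by
  have := Int.emod_nonneg S (by have := a.pos; omega : (n : ℤ) ≠ 0)
  unfold balancedVec; split_ifs <;> omega

lemma balancedVec_cases {m M : ℤ} (hmS : n * m ≤ S) (hwide : n - 2 ≤ M - m) :
    (∀ a, S - M ≤ (n - 1) * balancedVec n S a ∧ balancedVec n S a ≤ M) ∨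
      (∀ a, m ≤ balancedVec n S a ∧ (n - 1) * balancedVec n S a ≤ S - m) := by
  have hdiv := Int.mul_ediv_add_emod S n
  by_cases hA : S / n + S % n ≤ M
  · refine Or.inl fun a => ⟨?_, (balancedVec_le_div_add_emod a).trans hA⟩
    have : (n - 1) * (S / n) ≤ (n - 1) * balancedVec n S a :=
      mul_le_mul_of_nonneg_left (div_le_balancedVec a) (by have := a.pos; omega)
    linarith
  · refine Or.inr fun a => ?_
    have hn : (0 : ℤ) < n := by have := a.pos; omega
    have hm : m ≤ S / n := (Int.le_ediv_iff_mul_le hn).mpr (by linarith)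
    have : (n - 1) * balancedVec n S a ≤ (n - 1) * (S / n + 1) :=
      mul_le_mul_of_nonneg_left (balancedVec_le_div_add_one a) (by omega)
    exact ⟨hm.trans (div_le_balancedVec a), by linarith⟩

end balancedVec

section TwoTransitive

variable {Γ : Subgroup (Equiv.Perm (Fin n))}
  (h2t : ∀ x1 x2 y1 y2 : Fin n, x1 ≠ x2 → y1 ≠ y2 → ∃ γ ∈ Γ, γ x1 = y1 ∧ γ x2 = y2)
include h2t

lemma apply_eq_of_forall_permAct_eq {v : EuclideanSpace ℝ (Fin n)} {a : Fin n}
    (hv : ∀ h ∈ Γ, h a = a → permAct h v = v) {c c' : Fin n} (hc : c ≠ a) (hc' : c' ≠ a) :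
    v c = v c' := by
  obtain ⟨h, hΓ, ha, rfl⟩ := h2t a c a c' hc.symm hc'.symm
  conv_rhs => rw [← hv h hΓ ha]
  simp

lemma exists_spike_mem_convexHull (hn : 2 ≤ n) (x : EuclideanSpace ℝ (Fin n)) (p a : Fin n) :
    ∃ v ∈ convexHull ℝ (orbitSet Γ x),
      v a = x p ∧ ∀ c ≠ a, v c = (∑ q, x q - x p) / (n - 1) := by
  obtain ⟨γ₀, hγ₀, hγ₀p⟩ : ∃ γ₀ ∈ Γ, γ₀ p = a := by
    have : Nontrivial (Fin n) := Fin.nontrivial_iff_two_le.mpr hn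
    obtain ⟨p', hp'⟩ := exists_ne p
    obtain ⟨a', ha'⟩ := exists_ne a
    obtain ⟨γ, hγ, h, -⟩ := h2t p p' a a' hp'.symm ha'.symm
    exact ⟨γ, hγ, h⟩
  have hclosed : ∀ h ∈ Γ ⊓ MulAction.stabilizer _ a, ∀ y ∈ orbitSet Γ x ∩ {y | y a = x p},
      permAct h y ∈ orbitSet Γ x ∩ {y | y a = x p} := by
    rintro h ⟨hΓ, ha⟩ _ ⟨⟨γ, hγ, rfl⟩, hy⟩
    have ha' : h.symm a = a := h.symm_apply_eq.mpr (MulAction.mem_stabilizer_iff.mp ha).symm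
    exact ⟨⟨h * γ, Γ.mul_mem hΓ hγ, rfl⟩, by simpa [ha'] using hy⟩
  have hne : (orbitSet Γ x ∩ {y | y a = x p}).Nonempty :=
    ⟨permAct γ₀ x, ⟨γ₀, hγ₀, rfl⟩, by simp [γ₀.symm_apply_eq.mpr hγ₀p.symm]⟩
  obtain ⟨v, hv, hv_inv⟩ := exists_mem_convexHull_permAct_eq hne hclosed
  have hv_a : v a = x p :=
    convexHull_min Set.inter_subset_right (convex_hyperplane (isLinearMap_coord a) _) hv
  have hv_mem := convexHull_mono Set.inter_subset_left hv
  refine ⟨v, hv_mem, hv_a, fun c hc => ?_⟩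
  have hsum := sum_eq_of_mem_convexHull_orbitSet hv_mem
  have hv_c : ∀ c' ∈ ({a}ᶜ : Finset (Fin n)), v c' = v c := fun c' hc' =>
    apply_eq_of_forall_permAct_eq h2t (fun h hΓ ha => hv_inv h ⟨hΓ, ha⟩) (by simpa using hc') hc
  rw [Fintype.sum_eq_add_sum_compl a, hv_a, Finset.sum_congr rfl hv_c, Finset.sum_const,
    Finset.card_compl, Finset.card_singleton, Fintype.card_fin, nsmul_eq_mul,
    Nat.cast_pred (by omega)] at hsum
  have : (2 : ℝ) ≤ n := by exact_mod_cast hn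
  rw [eq_div_iff (by linarith)]
  linarith

lemma mem_convexHull_of_mem_uIcc (hn : 2 ≤ n) (x : EuclideanSpace ℝ (Fin n)) (p : Fin n)
    (u : EuclideanSpace ℝ (Fin n)) (hsum : ∑ c, u c = ∑ c, x c)
    (hu : ∀ a, u a ∈ Set.uIcc ((∑ q, x q - x p) / (n - 1)) (x p)) :
    u ∈ convexHull ℝ (orbitSet Γ x) := by
  choose v hv_mem hv_a hv_ne using exists_spike_mem_convexHull h2t hn x p
  set B := (∑ q, x q - x p) / (n - 1)
  have hv : ∀ a c, v a c = B + if a = c then x p - B else 0 := by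
    intro a c
    by_cases h : a = c
    · subst h; simp [hv_a]
    · simp [hv_ne a c (Ne.symm h), h, B]
  have hn1 : (n : ℝ) - 1 ≠ 0 := by
    have : (2:ℝ) ≤ n := by exact_mod_cast hn
    linarith
  by_cases hB : x p = B
  · obtain ⟨a⟩ : Nonempty (Fin n) := ⟨⟨0, by omega⟩⟩
    convert hv_mem a
    ext c
    have := hu c
    rw [hB, Set.uIcc_self, Set.mem_singleton_iff] at this
    simp [hv, this, hB]
  -- `u` is the combination of the spikes with weights `t a`
  set t : Fin n → ℝ := fun a => (u a - B) / (x p - B)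
  have ht_nonneg : ∀ a, 0 ≤ t a := by
    intro a
    rcases Set.mem_uIcc.mp (hu a) with ⟨h₁, h₂⟩ | ⟨h₁, h₂⟩
    · exact div_nonneg (by linarith) (by linarith)
    · exact div_nonneg_of_nonpos (by linarith) (by linarith)
  have ht_sum : ∑ a, t a = 1 := by
    have hB' : (n : ℝ) * B = ∑ q, x q - x p + B := by
      simp only [B]; field_simp; ring
    rw [← Finset.sum_div, Finset.sum_sub_distrib, hsum, Finset.sum_const, Finset.card_univ,
      Fintype.card_fin, nsmul_eq_mul, hB', div_eq_one_iff_eq (sub_ne_zero.mpr hB)]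
    ring
  convert (convex_convexHull ℝ _).sum_mem (fun a _ => ht_nonneg a) ht_sum fun a _ => hv_mem a
  ext c
  simp only [WithLp.ofLp_sum, WithLp.ofLp_smul, Finset.sum_apply, Pi.smul_apply, smul_eq_mul, hv,
    mul_add, Finset.sum_add_distrib, ← Finset.sum_mul, ht_sum, mul_ite, mul_zero,
    Finset.sum_ite_eq', Finset.mem_univ, if_true, t]
  field_simp [sub_ne_zero.mpr hB]
  ring

lemma intVec_balancedVec_mem_convexHull (hn : 2 ≤ n) (z : Fin n → ℤ) (i : Fin n) {im : Fin n}
    (him : ∀ c, z im ≤ z c) (hwide : n - 2 ≤ z i - z im) :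
    intVec (balancedVec n (∑ c, z c)) ∈ convexHull ℝ (orbitSet Γ (intVec z)) := by
  set S := ∑ c, z c
  have hsum_z : ∑ c, intVec z c = S := by simp [S]
  have hsum_u : ∑ c, intVec (balancedVec n S) c = ∑ c, intVec z c := by
    rw [hsum_z]
    simp only [intVec_apply]
    exact_mod_cast sum_balancedVec (by omega)
  have hn1 : (0 : ℝ) < n - 1 := by
    have : (2 : ℝ) ≤ n := by exact_mod_cast hn
    linarith
  have hmS : n * z im ≤ S := by
    simpa using Finset.card_nsmul_le_sum Finset.univ z (z im) fun c _ => him c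
  rcases balancedVec_cases hmS hwide with hA | hB
  · refine mem_convexHull_of_mem_uIcc h2t hn _ i _ hsum_u fun a =>
      Set.mem_uIcc.mpr (Or.inl ⟨?_, ?_⟩)
    · rw [div_le_iff₀ hn1, hsum_z]
      have : ((S - z i : ℤ) : ℝ) ≤ (((n : ℤ) - 1) * balancedVec n S a : ℤ) := by
        exact_mod_cast (hA a).1
      simp only [intVec_apply]
      push_cast at this
      linarith
    · simpa using (hA a).2
  · refine mem_convexHull_of_mem_uIcc h2t hn _ im _ hsum_u fun a =>
      Set.mem_uIcc.mpr (Or.inr ⟨?_, ?_⟩)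
    · simpa using (hB a).1
    · rw [le_div_iff₀ hn1, hsum_z]
      have : (((n : ℤ) - 1) * balancedVec n S a : ℤ) ≤ ((S - z im : ℤ) : ℝ) := by
        exact_mod_cast (hB a).2
      simp only [intVec_apply]
      push_cast at this
      linarith

end TwoTransitive

end CorePoint

open CorePoint

theorem stmt6 {n : ℕ} (hn : 4 ≤ n) (Γ : Subgroup (Equiv.Perm (Fin n)))
    (h2t : ∀ x1 x2 y1 y2 : Fin n, x1 ≠ x2 → y1 ≠ y2 →
      ∃ γ ∈ Γ, γ x1 = y1 ∧ γ x2 = y2)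
    (z : Fin n → ℤ) (hcore : IsCorePoint Γ z) :
    ∀ i j : Fin n, z i - z j ≤ (n : ℤ) - 3 := by
  intro i j
  by_contra! hij
  have : Nonempty (Fin n) := ⟨i⟩
  obtain ⟨im, him⟩ := Finite.exists_min z
  obtain ⟨γ, -, hγ⟩ := hcore _ <|
    intVec_balancedVec_mem_convexHull h2t (by omega) z i him (by linarith [him j])
  have hzi := apply_eq_of_intVec_eq_permAct hγ i
  have hzm := apply_eq_of_intVec_eq_permAct hγ im
  have := balancedVec_le_div_add_one (S := ∑ c, z c) (γ i)
  have := div_le_balancedVec (S := ∑ c, z c) (γ im)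
  linarith [him j]
end
end

section
/- Let V ⊆ R^n be a linear subspace whose only rational vector is 0 (an irrational subspace) that is orthogonal to the all-ones vector. Then for every ε > 0 and every k ∈ {1,...,n−1} there exists z ∈ Z^n with Σ_i z_i = k and ‖π_V(z)‖ < ε. -/
noncomputable section

open scoped RealInnerProductSpace

/-!
Integral vectors with coordinate sum `k` form the coset `k e₁ + Z` of the zero-sum lattice `Z`,
so it suffices that `π_V(Z)` is dense in `V`. By Kronecker's theorem, a subgroup `G` of a
finite-dimensional inner product space is dense unless some `y ≠ 0` has `⟪y, g⟫ ∈ ℤ` for all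
`g ∈ G`: otherwise the closure `H` of `G` contains a largest subspace `W ≠ ⊤`, the group
`H ∩ Wᗮ` is discrete (a closed subgroup accumulating at `0` contains a line), and a nonzero
`y ∈ Wᗮ` integral on `H ∩ Wᗮ` is integral on `G`. For `G = π_V(Z)` and `y ∈ V`, the pairings
`⟪y, π_V(eᵢ - eⱼ)⟫ = yᵢ - yⱼ` are integers and `∑ yᵢ = 0`, so `y` is rational, hence `0`.
-/

open Filter Topology

lemma norm_floor_smul_sub_smul_le {E : Type*} [NormedAddCommGroup E] [NormedSpace ℝ E]
    (s : ℝ) (x : E) : ‖(⌊s⌋ : ℝ) • x - s • x‖ ≤ ‖x‖ := by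
  calc ‖(⌊s⌋ : ℝ) • x - s • x‖ = |Int.fract s| * ‖x‖ := by
        rw [← sub_smul, norm_smul, Real.norm_eq_abs, abs_sub_comm, Int.self_sub_floor]
    _ ≤ 1 * ‖x‖ := by
        gcongr
        rw [abs_of_nonneg (Int.fract_nonneg s)]
        exact (Int.fract_lt_one s).le
    _ = ‖x‖ := one_mul _

namespace AddSubgroup

variable {E : Type*} [NormedAddCommGroup E] [NormedSpace ℝ E]

/-- The lineality space of `H`: the largest real subspace contained in `H`. -/
def lineal (H : AddSubgroup E) : Submodule ℝ E where
  carrier := {x | ∀ t : ℝ, t • x ∈ H}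
  add_mem' hx hy t := by simpa [smul_add] using H.add_mem (hx t) (hy t)
  zero_mem' t := by simp
  smul_mem' c x hx t := by simpa [smul_smul] using hx (t * c)

lemma mem_of_mem_lineal {H : AddSubgroup E} {x : E} (hx : x ∈ H.lineal) : x ∈ H := by
  simpa using hx 1

section FiniteDimensional

variable [FiniteDimensional ℝ E] {H : AddSubgroup E}

lemma lineal_ne_bot_of_tendsto_zero (hH : IsClosed (H : Set E)) {x : ℕ → E}
    (hxH : ∀ j, x j ∈ H) (hx0 : ∀ j, x j ≠ 0) (hx : Tendsto x atTop (𝓝 0)) : H.lineal ≠ ⊥ := by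
  set u : ℕ → E := fun j => ‖x j‖⁻¹ • x j
  have hu : ∀ j, u j ∈ Metric.sphere (0 : E) 1 := fun j => by
    simp [u, norm_smul, inv_mul_cancel₀ (norm_ne_zero_iff.2 (hx0 j))]
  obtain ⟨v, hv, φ, hφ, huv⟩ := (isCompact_sphere (0 : E) 1).tendsto_subseq hu
  have hv0 : v ≠ 0 := by rintro rfl; simp at hv
  refine (Submodule.ne_bot_iff _).2 ⟨v, fun t => ?_, hv0⟩
  -- `⌊t / ‖x‖⌋ • x ∈ H` is within `‖x‖` of `t • (‖x‖⁻¹ • x)`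
  have herr : Tendsto (fun j => (⌊t / ‖x (φ j)‖⌋ : ℝ) • x (φ j) - t • u (φ j)) atTop (𝓝 0) := by
    refine squeeze_zero_norm (fun j => ?_) (by simpa using (hx.comp hφ.tendsto_atTop).norm)
    simpa [u, smul_smul, div_eq_mul_inv] using norm_floor_smul_sub_smul_le (t / ‖x (φ j)‖) (x (φ j))
  have hlim : Tendsto (fun j => (⌊t / ‖x (φ j)‖⌋ : ℝ) • x (φ j)) atTop (𝓝 (t • v)) := by
    simpa using herr.add (huv.const_smul t)
  refine hH.mem_of_tendsto hlim (Eventually.of_forall fun j => ?_)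
  rw [Int.cast_smul_eq_zsmul]
  exact H.zsmul_mem (hxH (φ j)) _

lemma discreteTopology_of_lineal_eq_bot (hH : IsClosed (H : Set E)) (h : H.lineal = ⊥) :
    DiscreteTopology H := by
  refine discreteTopology_of_isOpen_singleton_zero (Metric.isOpen_singleton_iff.2 ?_)
  by_contra! hacc
  choose x hxdist hx0 using fun j : ℕ => hacc (1 / (j + 1)) Nat.one_div_pos_of_nat
  refine lineal_ne_bot_of_tendsto_zero hH (fun j => (x j).2) (fun j => by simpa using hx0 j) ?_ h
  exact squeeze_zero_norm (fun j => by simpa using (hxdist j).le)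
    tendsto_one_div_add_atTop_nhds_zero_nat

end FiniteDimensional

end AddSubgroup

theorem exists_ne_zero_forall_inner_mem_int {F : Type*} [NormedAddCommGroup F]
    [InnerProductSpace ℝ F] [FiniteDimensional ℝ F] [Nontrivial F] (Λ : AddSubgroup F)
    [DiscreteTopology Λ] : ∃ y : F, y ≠ 0 ∧ ∀ x ∈ Λ, ∃ m : ℤ, ⟪y, x⟫ = m := by
  set L := Λ.toIntSubmodule
  by_cases hspan : Submodule.span ℝ (L : Set F) = ⊤
  · have : DiscreteTopology L := ‹DiscreteTopology Λ›
    have : IsZLattice ℝ L := ⟨hspan⟩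
    let b := Module.Free.chooseBasis ℤ L
    let B := b.ofZLatticeBasis ℝ L
    obtain ⟨j⟩ := B.index_nonempty
    -- the `j`-th coordinate of `B` is integral on `L`
    set y := (InnerProductSpace.toDual ℝ F).symm (B.coord j).toContinuousLinearMap
    have hy : ∀ x, ⟪y, x⟫ = B.repr x j := by simp [y, InnerProductSpace.toDual_symm_apply]
    refine ⟨y, fun h0 => ?_, fun x hx => ⟨b.repr ⟨x, hx⟩ j, ?_⟩⟩
    · simpa [h0] using hy (B j)
    · exact (hy x).trans (b.ofZLatticeBasis_repr_apply ℝ L ⟨x, hx⟩ j)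
  · obtain ⟨y, hy, hy0⟩ := (Submodule.ne_bot_iff _).1 (Submodule.orthogonal_eq_bot_iff.not.2 hspan)
    refine ⟨y, hy0, fun x hx => ⟨0, ?_⟩⟩
    simpa using (Submodule.mem_orthogonal' _ _).1 hy x (Submodule.subset_span hx)

theorem dense_of_forall_inner_mem_int_imp_eq_zero {E : Type*} [NormedAddCommGroup E]
    [InnerProductSpace ℝ E] [FiniteDimensional ℝ E] (G : AddSubgroup E)
    (hG : ∀ y : E, (∀ g ∈ G, ∃ m : ℤ, ⟪y, g⟫ = m) → y = 0) : Dense (G : Set E) := by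
  set H := G.topologicalClosure
  set W := H.lineal
  suffices hW : W = ⊤ from fun x => AddSubgroup.mem_of_mem_lineal (hW ▸ Submodule.mem_top)
  by_contra hW
  have : Nontrivial Wᗮ :=
    Submodule.nontrivial_iff_ne_bot.2 (Submodule.orthogonal_eq_bot_iff.not.2 hW)
  set Λ : AddSubgroup Wᗮ := H.comap Wᗮ.subtype.toAddMonoidHom
  have hΛ : IsClosed (Λ : Set Wᗮ) := G.isClosed_topologicalClosure.preimage continuous_subtype_val
  have hΛW : Λ.lineal = ⊥ := by
    refine (Submodule.eq_bot_iff _).2 fun x hx => Subtype.ext ?_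
    exact inner_self_eq_zero.1 (x.2 _ fun t => hx t)
  have := AddSubgroup.discreteTopology_of_lineal_eq_bot hΛ hΛW
  obtain ⟨y, hy0, hyΛ⟩ := exists_ne_zero_forall_inner_mem_int Λ
  refine hy0 (Subtype.ext (hG y fun g hg => ?_))
  -- pairing with `y ∈ Wᗮ` only sees `g - π_W g`, which lies in `H ∩ Wᗮ`
  have hgΛ : Wᗮ.orthogonalProjectionOnto g ∈ Λ := by
    show (Wᗮ.orthogonalProjectionOnto g : E) ∈ H
    rw [Submodule.orthogonalProjectionOnto_orthogonal]
    exact H.sub_mem (G.le_topologicalClosure hg)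
      (AddSubgroup.mem_of_mem_lineal (W.starProjection_apply_mem g))
  obtain ⟨m, hm⟩ := hyΛ _ hgΛ
  exact ⟨m, by rwa [Submodule.inner_orthogonalProjectionOnto_eq_of_mem_left] at hm⟩

lemma intVec_add {n : ℕ} (a b : Fin n → ℤ) : intVec (a + b) = intVec a + intVec b := by
  ext i; simp [intVec]

lemma exists_rat_eq_of_sub_mem_int_of_sum_eq_zero {n : ℕ} (y : Fin n → ℝ)
    (hy : ∀ i j, ∃ m : ℤ, y i - y j = m) (hsum : ∑ i, y i = 0) :
    ∃ q : Fin n → ℚ, y = fun i => (q i : ℝ) := by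
  choose m hm using hy
  refine ⟨fun i => (∑ j, m i j : ℚ) / n, funext fun i => ?_⟩
  have hn : (n : ℝ) ≠ 0 := Nat.cast_ne_zero.2 (Fin.pos i).ne'
  -- `y i = (∑ j, (y i - y j)) / n` because `∑ j, y j = 0`
  calc y i = (∑ j, (y i - y j)) / n := by
        rw [Finset.sum_sub_distrib, hsum, sub_zero, Finset.sum_const, Finset.card_fin, nsmul_eq_mul,
          mul_div_cancel_left₀ _ hn]
    _ = _ := by push_cast; simp [hm]

def zeroSumLattice (n : ℕ) : AddSubgroup (Fin n → ℤ) :=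
  (∑ i, Pi.evalAddMonoidHom (fun _ => ℤ) i).ker

lemma mem_zeroSumLattice {n : ℕ} {w : Fin n → ℤ} : w ∈ zeroSumLattice n ↔ ∑ i, w i = 0 := by
  simp [zeroSumLattice, AddMonoidHom.finsetSum_apply]

def intVecProjHom {n : ℕ} (V : Submodule ℝ (EuclideanSpace ℝ (Fin n))) : (Fin n → ℤ) →+ V :=
  AddMonoidHom.mk' (fun z => V.orthogonalProjectionOnto (intVec z)) fun a b => by
    rw [intVec_add, map_add]

lemma dense_intVecProjHom_zeroSumLattice {n : ℕ} (V : Submodule ℝ (EuclideanSpace ℝ (Fin n)))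
    (hVirr : ∀ v ∈ V, (∃ q : Fin n → ℚ, v = fun i => (q i : ℝ)) → v = 0)
    (h1V : ∀ v ∈ V, ⟪v, allOnes n⟫ = 0) :
    Dense (((zeroSumLattice n).map (intVecProjHom V) : AddSubgroup V) : Set V) := by
  refine dense_of_forall_inner_mem_int_imp_eq_zero _ fun y hy => ?_
  set Y : EuclideanSpace ℝ (Fin n) := ↑y
  have hint : ∀ i j, ∃ m : ℤ, Y i - Y j = m := by
    intro i j
    obtain ⟨m, hm⟩ :=
      hy _ ⟨Pi.single i 1 - Pi.single j 1, mem_zeroSumLattice.2 (by simp), rfl⟩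
    refine ⟨m, ?_⟩
    rw [← hm]
    simp [Y, intVecProjHom, intVec, PiLp.inner_apply, Pi.single_apply, sub_mul]
  have hsum : ∑ i, Y i = 0 := by simpa [allOnes, PiLp.inner_apply] using h1V y y.2
  exact Subtype.ext (hVirr y y.2 (exists_rat_eq_of_sub_mem_int_of_sum_eq_zero _ hint hsum))

theorem stmt13 {n : ℕ} (V : Submodule ℝ (EuclideanSpace ℝ (Fin n)))
    (hVirr : ∀ v ∈ V, (∃ q : Fin n → ℚ, v = fun i => (q i : ℝ)) → v = 0)
    (h1V : ∀ v ∈ V, ⟪v, (allOnes n)⟫ = 0)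
    (ε : ℝ) (hε : 0 < ε) (k : ℕ) (hk1 : 1 ≤ k) (hk2 : k ≤ n - 1) :
    ∃ z : Fin n → ℤ, ∑ i, z i = (k : ℤ) ∧
      ‖(Submodule.orthogonalProjectionOnto V (intVec z) : EuclideanSpace ℝ (Fin n))‖ < ε := by
  have hn : 0 < n := by omega
  set φ := intVecProjHom V
  set z₀ : Fin n → ℤ := Pi.single ⟨0, hn⟩ k
  obtain ⟨_, ⟨w, hw, rfl⟩, hdist⟩ :=
    (dense_intVecProjHom_zeroSumLattice V hVirr h1V).exists_dist_lt (-φ z₀) hε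
  refine ⟨z₀ + w, by simp [z₀, mem_zeroSumLattice.1 hw, Finset.sum_add_distrib], ?_⟩
  calc ‖(V.orthogonalProjectionOnto (intVec (z₀ + w)) : EuclideanSpace ℝ (Fin n))‖
        = dist (-φ z₀) (φ w) := by
          rw [dist_comm, dist_eq_norm, sub_neg_eq_add, ← map_add, add_comm]; rfl
    _ < ε := hdist
end
end

section
/- Let Γ ≤ S_n be a transitive imprimitive permutation group preserving a block system with blocks of size S, 1 < S < n. If k ∈ Z is not a multiple of S, then Γ has infinitely many core points z with Σ_i z_i = k. -/
noncomputable section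

open scoped RealInnerProductSpace

/-!
Take `A` inside one block `Ω` with `#A ≡ k (mod S)` and `z = 1_A + c • 1_Ω + t • 1` with
`S c + n t = k - #A`. If an integral `y` is a convex combination `∑ w_j • γ_j z`, then
`y = u + c v + t` with `u = ∑ w_j • 1_{γ_j A}` and `v = ∑ w_j • 1_{γ_j Ω}`; here `v` is constant on
blocks and `0 ≤ u ≤ v ≤ 1`. If `v < 1` everywhere, `y` is constant on blocks, so `S ∣ ∑ y = ∑ z`,
which is `#A` modulo `S`. Hence `v = 1` on some block, `v` and then `u = y - c v - t` are `0/1`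
vectors, and a convex combination of `0/1` vectors that is itself `0/1` equals each of its terms
of positive weight: `y = γ_j z`.
-/

open Finset Equiv

section ConvexWeights

variable {ι : Type*} [Fintype ι] {w : ι → ℝ}

lemma sum_mul_mem_Icc (hw0 : ∀ j, 0 ≤ w j) (hw1 : ∑ j, w j = 1) {f : ι → ℝ}
    (hf : ∀ j, f j ∈ Set.Icc (0 : ℝ) 1) : ∑ j, w j * f j ∈ Set.Icc (0 : ℝ) 1 :=
  ⟨sum_nonneg fun j _ => mul_nonneg (hw0 j) (hf j).1,
    hw1 ▸ sum_le_sum fun j _ => mul_le_of_le_one_right (hw0 j) (hf j).2⟩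

lemma eq_of_sum_mul_eq_intCast (hw0 : ∀ j, 0 ≤ w j) (hw1 : ∑ j, w j = 1) {f : ι → ℝ}
    (hf : ∀ j, f j ∈ Set.Icc (0 : ℝ) 1) {m : ℤ} (hm : ∑ j, w j * f j = m) {j : ι}
    (hj : w j ≠ 0) : f j = m := by
  obtain ⟨hm0, hm1⟩ := hm ▸ sum_mul_mem_Icc hw0 hw1 hf
  obtain rfl | rfl : m = 0 ∨ m = 1 := by
    have : 0 ≤ m ∧ m ≤ 1 := ⟨by exact_mod_cast hm0, by exact_mod_cast hm1⟩
    omega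
  · have h := (sum_eq_zero_iff_of_nonneg fun j _ => mul_nonneg (hw0 j) (hf j).1).1
      (by simpa using hm) j (mem_univ j)
    simpa [hj] using h
  · have hsum : ∑ j, w j * (1 - f j) = 0 := by
      simp only [mul_sub, mul_one, sum_sub_distrib, hw1, hm]; simp
    have h := (sum_eq_zero_iff_of_nonneg fun j _ => mul_nonneg (hw0 j) (sub_nonneg.2 (hf j).2)).1
      hsum j (mem_univ j)
    simp only [mul_eq_zero, hj, false_or, sub_eq_zero] at h
    simp [← h]

lemma sum_mul_eq_of_forall_ne_zero (hw1 : ∑ j, w j = 1) {f : ι → ℝ} {c : ℝ}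
    (hf : ∀ j, w j ≠ 0 → f j = c) : ∑ j, w j * f j = c := by
  calc ∑ j, w j * f j = ∑ j, w j * c := sum_congr rfl fun j _ => by
        rcases eq_or_ne (w j) 0 with h | h
        · simp [h]
        · rw [hf j h]
    _ = c := by rw [← sum_mul, hw1, one_mul]

lemma exists_eq_add_mul_of_sum_mul_eq_intCast (hw0 : ∀ j, 0 ≤ w j) (hw1 : ∑ j, w j = 1)
    {α : Type*} {f g : ι → α → ℝ} (hf : ∀ j i, f j i ∈ Set.Icc (0 : ℝ) 1)
    (hg : ∀ j i, g j i ∈ Set.Icc (0 : ℝ) 1) {y m : α → ℤ} {c : ℤ}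
    (hy : ∀ i, (y i : ℝ) = ∑ j, w j * f j i + c * ∑ j, w j * g j i)
    (hm : ∀ i, ∑ j, w j * g j i = m i) : ∃ j, ∀ i, (y i : ℝ) = f j i + c * g j i := by
  obtain ⟨j, hj⟩ : ∃ j, w j ≠ 0 := by
    by_contra! h
    simp [h] at hw1
  refine ⟨j, fun i => ?_⟩
  have hgj := eq_of_sum_mul_eq_intCast hw0 hw1 (hg · i) (hm i) hj
  have hfj := eq_of_sum_mul_eq_intCast hw0 hw1 (hf · i) (m := y i - c * m i)
    (by push_cast; rw [hy, hm]; ring) hj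
  rw [hfj, hgj]
  push_cast
  ring

lemma sum_eq_sum_of_forall_eq_sum_mul_perm_inv (hw1 : ∑ j, w j = 1) {n : ℕ}
    (γ : ι → Perm (Fin n)) {y z : Fin n → ℤ}
    (hy : ∀ i, (y i : ℝ) = ∑ j, w j * z ((γ j)⁻¹ i)) : ∑ i, y i = ∑ i, z i := by
  have h : ∑ i, ∑ j, w j * (z ((γ j)⁻¹ i) : ℝ) = ∑ i, (z i : ℝ) := by
    rw [sum_comm]
    simp_rw [← mul_sum, fun j => Equiv.sum_comp (γ j)⁻¹ (fun i => (z i : ℝ)), ← sum_mul, hw1,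
      one_mul]
  simp only [← hy] at h
  exact_mod_cast h

end ConvexWeights

section Fibers

variable {α κ : Type*} [Fintype α] [Fintype κ] [DecidableEq κ] {β : α → κ} {S : ℕ}

lemma card_eq_mul_of_card_fiber (hsize : ∀ b, #{i | β i = b} = S) :
    Fintype.card α = S * Fintype.card κ := by
  rw [← card_univ, card_eq_sum_card_fiberwise fun i _ => mem_univ (β i)]
  simp [hsize, mul_comm]

lemma dvd_sum_of_card_fiber (hsize : ∀ b, #{i | β i = b} = S) {f : α → ℤ}
    (hf : ∀ i j, β i = β j → f i = f j) : (S : ℤ) ∣ ∑ i, f i := by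
  rw [← sum_fiberwise univ β f]
  refine dvd_sum fun b _ => ?_
  obtain hb | ⟨i, hi⟩ := eq_empty_or_nonempty {i | β i = b}
  · simp [hb]
  · rw [sum_eq_card_nsmul (b := f i) fun j hj => hf j i (by simp_all), hsize, nsmul_eq_mul]
    exact dvd_mul_right _ _

end Fibers

section CorePoint

variable {n : ℕ} {Γ : Subgroup (Perm (Fin n))}

lemma intVec_eq_permAct_iff {y z : Fin n → ℤ} {g : Perm (Fin n)} :
    intVec y = permAct g (intVec z) ↔ ∀ i, y i = z (g⁻¹ i) := by
  simp [intVec, permAct, WithLp.ext_iff, funext_iff]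

lemma isCorePoint_iff {z : Fin n → ℤ} :
    IsCorePoint Γ z ↔ ∀ (ι : Type) [Fintype ι] (w : ι → ℝ) (γ : ι → Perm (Fin n)),
      (∀ j, γ j ∈ Γ) → (∀ j, 0 ≤ w j) → ∑ j, w j = 1 → ∀ y : Fin n → ℤ,
      (∀ i, (y i : ℝ) = ∑ j, w j * z ((γ j)⁻¹ i)) → ∃ g ∈ Γ, ∀ i, y i = z (g⁻¹ i) := by
  have hcomb : ∀ {ι : Type} [Fintype ι] (w : ι → ℝ) (γ : ι → Perm (Fin n)) (y : Fin n → ℤ),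
      ∑ j, w j • permAct (γ j) (intVec z) = intVec y ↔
        ∀ i, (y i : ℝ) = ∑ j, w j * z ((γ j)⁻¹ i) := by
    intro ι _ w γ y
    simp [intVec, permAct, WithLp.ext_iff, funext_iff, WithLp.ofLp_sum, eq_comm]
  constructor
  · intro h ι _ w γ hγ hw0 hw1 y hy
    obtain ⟨g, hg, hyg⟩ := h y <| mem_convexHull_of_exists_fintype w _ hw0 hw1
      (fun j => ⟨γ j, hγ j, rfl⟩) ((hcomb w γ y).2 hy)
    exact ⟨g, hg, intVec_eq_permAct_iff.1 hyg⟩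
  · intro h y hy
    obtain ⟨ι, _, w, p, hw0, hw1, hp, hwp⟩ := mem_convexHull_iff_exists_fintype.1 hy
    choose γ hγ hpγ using hp
    simp only [hpγ] at hwp
    obtain ⟨g, hg, hyg⟩ := h ι w γ hγ hw0 hw1 y ((hcomb w γ y).1 hwp)
    exact ⟨g, hg, intVec_eq_permAct_iff.2 hyg⟩

lemma IsCorePoint.add_const {z : Fin n → ℤ} (hz : IsCorePoint Γ z) (t : ℤ) :
    IsCorePoint Γ (fun i => z i + t) := by
  rw [isCorePoint_iff] at hz ⊢
  intro ι _ w γ hγ hw0 hw1 y hy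
  obtain ⟨g, hg, hyg⟩ := hz ι w γ hγ hw0 hw1 (fun i => y i - t) fun i => by
    simp only [hy, Int.cast_sub, Int.cast_add, mul_add, sum_add_distrib, ← sum_mul, hw1]
    ring
  exact ⟨g, hg, fun i => by rw [← hyg]; ring⟩

end CorePoint

section Blocks

variable {α κ : Type*} {β : α → κ}

lemma apply_eq_apply_iff_of_mem {Γ : Subgroup (Perm α)}
    (hblocks : ∀ γ ∈ Γ, ∃ σ : Perm κ, ∀ i, β (γ i) = σ (β i)) {g : Perm α} (hg : g ∈ Γ)
    (i j : α) : β (g i) = β (g j) ↔ β i = β j := by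
  obtain ⟨σ, hσ⟩ := hblocks g hg
  rw [hσ, hσ, σ.apply_eq_iff_eq]

/-- On a fibre where `v < 1`, the integers `y = u + c v` differ by less than `1`, so they are
equal; if that happened on every fibre, `S` would divide `∑ y`. -/
lemma exists_eq_one_of_not_dvd_sum [Fintype α] [Fintype κ] [DecidableEq κ] {S : ℕ}
    (hsize : ∀ b, #{i | β i = b} = S) {y : α → ℤ} {u v : α → ℝ} {c : ℤ}
    (hy : ∀ i, (y i : ℝ) = u i + c * v i) (hu : ∀ i, 0 ≤ u i ∧ u i ≤ v i)
    (hv : ∀ i j, β i = β j → v i = v j) (hv1 : ∀ i, v i ≤ 1) (hS : ¬ (S : ℤ) ∣ ∑ i, y i) :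
    ∃ i, v i = 1 := by
  by_contra! h
  refine hS (dvd_sum_of_card_fiber hsize fun i j hij => ?_)
  have hlt : v i < 1 := lt_of_le_of_ne (hv1 i) (h i)
  obtain ⟨hui0, hui⟩ := hu i
  obtain ⟨huj0, huj⟩ := hu j
  have hdiff : |((y i - y j : ℤ) : ℝ)| < 1 := by
    rw [Int.cast_sub, hy, hy, hv i j hij, abs_lt]
    rw [hv i j hij] at hui hlt
    constructor <;> linarith
  exact sub_eq_zero.1 (Int.abs_lt_one_iff.1 (by exact_mod_cast hdiff))

end Blocks

lemma sum_indicator_add_mul_indicator_fiber {n B S : ℕ} {β : Fin n → Fin B}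
    (hsize : ∀ b, #{i | β i = b} = S) (A : Finset (Fin n)) (b₀ : Fin B) (c : ℤ) :
    ∑ i, ((if i ∈ A then 1 else 0) + c * if β i = b₀ then 1 else 0) = #A + c * S := by
  rw [sum_add_distrib, ← mul_sum, sum_boole, sum_boole, hsize]
  simp

lemma isCorePoint_indicator_add_mul_indicator_fiber {n B S : ℕ} {Γ : Subgroup (Perm (Fin n))}
    {β : Fin n → Fin B} (hblocks : ∀ γ ∈ Γ, ∃ σ : Perm (Fin B), ∀ i, β (γ i) = σ (β i))
    (hsize : ∀ b, #{i | β i = b} = S) {A : Finset (Fin n)} {b₀ : Fin B}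
    (hA : ∀ i ∈ A, β i = b₀) (hAS : ¬ (S : ℤ) ∣ #A) (c : ℤ) :
    IsCorePoint Γ (fun i => (if i ∈ A then 1 else 0) + c * if β i = b₀ then 1 else 0) := by
  rw [isCorePoint_iff]
  intro ι _ w γ hγ hw0 hw1 y hy
  have hind : ∀ (p : Prop) [Decidable p], (if p then (1 : ℝ) else 0) ∈ Set.Icc (0 : ℝ) 1 := by
    intro p _; split_ifs <;> simp
  set f : ι → Fin n → ℝ := fun j i => if (γ j)⁻¹ i ∈ A then 1 else 0
  set g : ι → Fin n → ℝ := fun j i => if β ((γ j)⁻¹ i) = b₀ then 1 else 0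
  have hblock : ∀ j i i', β ((γ j)⁻¹ i) = β ((γ j)⁻¹ i') ↔ β i = β i' :=
    fun j => apply_eq_apply_iff_of_mem hblocks (Γ.inv_mem (hγ j))
  have hyfg : ∀ i, (y i : ℝ) = ∑ j, w j * f j i + c * ∑ j, w j * g j i := by
    intro i
    simp only [hy i, f, g, mul_sum, ← sum_add_distrib]
    push_cast
    exact sum_congr rfl fun j _ => by ring
  have hfg : ∀ i, 0 ≤ ∑ j, w j * f j i ∧ ∑ j, w j * f j i ≤ ∑ j, w j * g j i := fun i =>
    ⟨(sum_mul_mem_Icc hw0 hw1 fun j => hind _).1, sum_le_sum fun j _ =>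
      mul_le_mul_of_nonneg_left (by simp only [f, g]; split_ifs <;> simp_all) (hw0 j)⟩
  have hg_block : ∀ i i', β i = β i' → ∑ j, w j * g j i = ∑ j, w j * g j i' := fun i i' h =>
    sum_congr rfl fun j _ => by simp only [g, (hblock j i i').2 h]
  have hsum : ¬ (S : ℤ) ∣ ∑ i, y i := by
    rwa [sum_eq_sum_of_forall_eq_sum_mul_perm_inv hw1 γ
      (z := fun i => (if i ∈ A then 1 else 0) + c * if β i = b₀ then 1 else 0) hy,
      sum_indicator_add_mul_indicator_fiber hsize, dvd_add_left (dvd_mul_left _ _)]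
  obtain ⟨i₀, hi₀⟩ := exists_eq_one_of_not_dvd_sum hsize hyfg hfg hg_block
    (fun i => (sum_mul_mem_Icc hw0 hw1 fun j => hind _).2) hsum
  have hfib : ∀ j, w j ≠ 0 → ∀ i, (β ((γ j)⁻¹ i) = b₀ ↔ β i = β i₀) := by
    intro j hj i
    have h := eq_of_sum_mul_eq_intCast hw0 hw1 (fun j => hind _) (m := 1)
      (by rw [Int.cast_one]; exact hi₀) hj
    rw [← hblock j i i₀, (by simpa [g] using h : β ((γ j)⁻¹ i₀) = b₀)]
  have hg_eq : ∀ i, ∑ j, w j * g j i = ((if β i = β i₀ then 1 else 0 : ℤ) : ℝ) := fun i => by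
    push_cast
    exact sum_mul_eq_of_forall_ne_zero hw1 fun j hj => if_congr (hfib j hj i) rfl rfl
  obtain ⟨j, hj⟩ := exists_eq_add_mul_of_sum_mul_eq_intCast hw0 hw1 (fun j i => hind _)
    (fun j i => hind _) hyfg hg_eq
  exact ⟨γ j, hγ j, fun i => by exact_mod_cast hj i⟩

theorem stmt16_general {n B S : ℕ} (Γ : Subgroup (Equiv.Perm (Fin n)))
    (β : Fin n → Fin B)
    (hsize : ∀ b : Fin B, (Finset.univ.filter fun i => β i = b).card = S)
    (hblocks : ∀ γ ∈ Γ, ∃ σ : Equiv.Perm (Fin B), ∀ i, β (γ i) = σ (β i))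
    (hS1 : 1 < S) (hSn : S < n)
    (k : ℤ) (hk : ¬ (S : ℤ) ∣ k) :
    {z : Fin n → ℤ | IsCorePoint Γ z ∧ ∑ i, z i = k}.Infinite := by
  have hn : n = S * B := by simpa using card_eq_mul_of_card_fiber hsize
  set b₀ := β ⟨0, by omega⟩
  have hr0 : 0 ≤ k % S := Int.emod_nonneg k (by omega)
  have hrS : k % S < S := Int.emod_lt_of_pos k (by omega)
  obtain ⟨A, hAb₀, hAcard⟩ := exists_subset_card_eq (s := {i | β i = b₀})
    (n := (k % S).toNat) (by rw [hsize]; omega)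
  have hA : ∀ i ∈ A, β i = b₀ := fun i hi => (mem_filter.1 (hAb₀ hi)).2
  have hAk : (#A : ℤ) = k % S := by rw [hAcard, Int.toNat_of_nonneg hr0]
  obtain ⟨i₁, hi₁⟩ : ∃ i₁, β i₁ ≠ b₀ := by
    by_contra! h
    have := hsize b₀
    simp [h] at this
    omega
  -- `z t = z 0 + t • (1 - B • 1_{b₀})`, and the direction has coordinate sum `0`
  let z : ℤ → Fin n → ℤ := fun t i =>
    ((if i ∈ A then 1 else 0) + (k / S - B * t) * if β i = b₀ then 1 else 0) + t
  refine Set.infinite_of_injective_forall_mem (f := z) (fun t t' h => ?_) fun t => ⟨?_, ?_⟩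
  · simpa [z, hi₁, fun h => hi₁ (hA i₁ h)] using congrFun h i₁
  · refine (isCorePoint_indicator_add_mul_indicator_fiber hblocks hsize hA ?_ _).add_const t
    rwa [hAk, Int.emod_def, dvd_sub_left (dvd_mul_right _ _)]
  · simp only [z, sum_add_distrib, sum_indicator_add_mul_indicator_fiber hsize, sum_const,
      card_univ, Fintype.card_fin, nsmul_eq_mul, hn, hAk]
    push_cast
    linear_combination Int.emod_add_mul_ediv k S

theorem stmt16 {n B S : ℕ} (Γ : Subgroup (Equiv.Perm (Fin n)))
    (htrans : ∀ i j : Fin n, ∃ γ ∈ Γ, γ i = j)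
    (β : Fin n → Fin B)
    (hsize : ∀ b : Fin B, (Finset.univ.filter fun i => β i = b).card = S)
    (hblocks : ∀ γ ∈ Γ, ∃ σ : Equiv.Perm (Fin B), ∀ i, β (γ i) = σ (β i))
    (hS1 : 1 < S) (hSn : S < n)
    (k : ℤ) (hk : ¬ (S : ℤ) ∣ k) :
    {z : Fin n → ℤ | IsCorePoint Γ z ∧ ∑ i, z i = k}.Infinite :=
  stmt16_general Γ β hsize hblocks hS1 hSn k hk
end
end
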